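/- Let P = P₁^{d₁}P₂^{d₂} and θ > 0. Then the Lebesgue measure of 𝔐(θ) satisfies meas(𝔐(θ)) ≤ C · P^{−R + R(R+1)(d̃+1)θ}, for a constant C depending only on R. -/
import Mathlib

open scoped Classical

noncomputable section

namespace Paper

def gcdCond (R : ℕ) (q : ℕ) (a : Fin R → ℤ) : Prop :=
  Nat.gcd q (Finset.univ.gcd fun r => (a r).natAbs) = 1

def majorArc' (R d₁ d₂ : ℕ) (P₁ P₂ θ : ℝ) (q : ℕ) (a : Fin R → ℤ) :
    Set (Fin R → ℝ) :=
  {α | (∀ i, α i ∈ Set.Icc (0 : ℝ) 1) ∧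
    ∀ i, |(q : ℝ) * α i - a i| ≤
      (q : ℝ) * (P₁ ^ d₁ * P₂ ^ d₂) ^ (-1 + R * ((d₁ : ℝ) + d₂ - 1) * θ)}

def majorArcs (R d₁ d₂ : ℕ) (P₁ P₂ θ : ℝ) : Set (Fin R → ℝ) :=
  {α | (∀ i, α i ∈ Set.Icc (0 : ℝ) 1) ∧ ∃ q : ℕ, ∃ a : Fin R → ℤ,
    1 ≤ q ∧ (q : ℝ) ≤ (P₁ ^ d₁ * P₂ ^ d₂) ^ (R * ((d₁ : ℝ) + d₂ - 1) * θ) ∧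
    gcdCond R q a ∧
    ∀ i, 2 * |(q : ℝ) * α i - a i| ≤
      P₁ ^ (-(d₁ : ℝ)) * P₂ ^ (-(d₂ : ℝ)) *
        (P₁ ^ d₁ * P₂ ^ d₂) ^ (R * ((d₁ : ℝ) + d₂ - 1) * θ)}

open MeasureTheory
open scoped ENNReal

set_option maxHeartbeats 1000000 in
/-- **Measure of the major arcs.** For `P = P₁^{d₁}P₂^{d₂}` and `θ > 0` one has
`meas(𝔐(θ)) ≤ C · P^{−R + R(R+1)(d̃+1)θ}`, with `C` depending only on `R`. -/
theorem major_arcs_measure (R : ℕ) (hR : 0 < R) :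
    ∃ C : ℝ, 0 < C ∧ ∀ (d₁ d₂ : ℕ), 0 < d₁ → 0 < d₂ →
      ∀ (P₁ P₂ θ : ℝ), 2 ≤ P₂ → P₂ ≤ P₁ → 0 < θ →
        volume (majorArcs R d₁ d₂ P₁ P₂ θ) ≤
          ENNReal.ofReal (C * (P₁ ^ d₁ * P₂ ^ d₂) ^
            (-(R : ℝ) + R * (R + 1) * ((d₁ : ℝ) + d₂ - 1) * θ)) := by
  refine ⟨4 ^ R, by positivity, ?_⟩
  intro d₁ d₂ hd₁ hd₂ P₁ P₂ θ hP₂ hP₁ hθ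
  have hP2 : (1:ℝ) < P₂ := by linarith
  have hP1 : (1:ℝ) < P₁ := by linarith
  set P : ℝ := P₁ ^ d₁ * P₂ ^ d₂ with hPdef
  have hPgt : (1:ℝ) < P := by
    have h1 : (1:ℝ) < P₁ ^ d₁ := one_lt_pow₀ hP1 hd₁.ne'
    have h2 : (1:ℝ) < P₂ ^ d₂ := one_lt_pow₀ hP2 hd₂.ne'
    nlinarith
  have hPpos : (0:ℝ) < P := by linarith
  set e : ℝ := R * ((d₁ : ℝ) + d₂ - 1) * θ with hedef
  have hd : (1:ℝ) ≤ (d₁ : ℝ) + d₂ - 1 := by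
    have : (1:ℝ) ≤ d₁ := by exact_mod_cast hd₁
    have : (1:ℝ) ≤ d₂ := by exact_mod_cast hd₂
    linarith
  have he : 0 < e := by
    have hRpos : (0:ℝ) < R := by exact_mod_cast hR
    have : (0:ℝ) < (d₁ : ℝ) + d₂ - 1 := by linarith
    positivity
  set expn : ℝ := -(R : ℝ) + R * (R + 1) * ((d₁ : ℝ) + d₂ - 1) * θ with hexpdef
  have hexp : expn = ((R:ℝ) + 1) * e - R := by rw [hexpdef, hedef]; ring
  by_cases hcase : 0 ≤ expn
  · -- trivial bound by the unit cube
    have h1 : volume (majorArcs R d₁ d₂ P₁ P₂ θ) ≤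
        volume (Set.univ.pi fun _ : Fin R => Set.Icc (0:ℝ) 1) := by
      refine measure_mono fun α hα => ?_
      rw [Set.mem_pi]
      exact fun i _ => hα.1 i
    have h2 : volume (Set.univ.pi fun _ : Fin R => Set.Icc (0:ℝ) 1) = 1 := by
      rw [volume_pi_pi]
      simp [Real.volume_Icc]
    refine (h1.trans_eq h2).trans ?_
    rw [ENNReal.one_le_ofReal]
    have h3 : (1:ℝ) ≤ P ^ expn := Real.one_le_rpow hPgt.le hcase
    have h4 : (1:ℝ) ≤ 4 ^ R := one_le_pow₀ (by norm_num)
    nlinarith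
  · push_neg at hcase
    -- nontrivial bound: covering argument
    have he1 : e < 1 := by
      have hRpos : (0:ℝ) < R := by exact_mod_cast hR
      nlinarith [hexp]
    set Q : ℝ := P ^ e with hQdef
    have hQ1 : (1:ℝ) ≤ Q := Real.one_le_rpow hPgt.le he.le
    have hQP : Q < P := by
      calc Q = P ^ e := rfl
        _ < P ^ (1:ℝ) := Real.rpow_lt_rpow_of_exponent_lt hPgt he1
        _ = P := Real.rpow_one P
    set D : ℝ := P₁ ^ (-(d₁ : ℝ)) * P₂ ^ (-(d₂ : ℝ)) * Q with hDdef
    have hDQ : D = Q / P := by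
      rw [hDdef, hPdef]
      rw [Real.rpow_neg (by linarith : (0:ℝ) ≤ P₁), Real.rpow_neg (by linarith : (0:ℝ) ≤ P₂),
        Real.rpow_natCast, Real.rpow_natCast]
      field_simp
    have hD0 : 0 ≤ D := by
      rw [hDQ]; positivity
    have hD1 : D ≤ 1 := by
      rw [hDQ, div_le_one hPpos]; linarith
    set N : ℕ := ⌊Q⌋₊ with hNdef
    set Box : ℕ → (Fin R → ℤ) → Set (Fin R → ℝ) := fun q a =>
      Set.univ.pi fun i => Set.Icc (((a i : ℝ) - D / 2) / q) (((a i : ℝ) + D / 2) / q)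
      with hBoxdef
    have hsub : majorArcs R d₁ d₂ P₁ P₂ θ ⊆
        ⋃ q ∈ Finset.Icc 1 N, ⋃ a ∈ Fintype.piFinset
          (fun _ : Fin R => Finset.Icc (-1 : ℤ) ((q : ℤ) + 1)), Box q a := by
      rintro α ⟨hbox, q, a, hq1, hqQ, -, hbnd⟩
      have hqpos : (0:ℝ) < q := by exact_mod_cast hq1
      have habs : ∀ i, |(q : ℝ) * α i - a i| ≤ D / 2 := by
        intro i
        have := hbnd i
        rw [hDdef]
        linarith
      refine Set.mem_iUnion₂.mpr ⟨q, Finset.mem_Icc.mpr ⟨hq1, Nat.le_floor hqQ⟩,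
        Set.mem_iUnion₂.mpr ⟨a, ?_, ?_⟩⟩
      · rw [Fintype.mem_piFinset]
        intro i
        have h := abs_le.mp (habs i)
        have hα := hbox i
        rw [Set.mem_Icc] at hα
        rw [Finset.mem_Icc]
        constructor
        · have : (-1 : ℝ) ≤ (a i : ℝ) := by nlinarith [hα.1, hα.2, h.1, h.2]
          exact_mod_cast this
        · have : (a i : ℝ) ≤ (q : ℝ) + 1 := by nlinarith [hα.1, hα.2, h.1, h.2]
          exact_mod_cast this
      · rw [hBoxdef]
        rw [Set.mem_pi]
        intro i _
        have h := abs_le.mp (habs i)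
        rw [Set.mem_Icc]
        constructor
        · rw [div_le_iff₀ hqpos]
          nlinarith [h.1, h.2]
        · rw [le_div_iff₀ hqpos]
          nlinarith [h.1, h.2]
    have hBoxvol : ∀ q : ℕ, 1 ≤ q → ∀ a : Fin R → ℤ,
        volume (Box q a) = ENNReal.ofReal ((D / q) ^ R) := by
      intro q hq a
      have hqpos : (0:ℝ) < q := by exact_mod_cast hq
      rw [hBoxdef]
      simp only
      rw [volume_pi_pi]
      have hlen : ∀ i : Fin R,
          ((a i : ℝ) + D / 2) / q - ((a i : ℝ) - D / 2) / q = D / q := by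
        intro i
        rw [div_sub_div_same]
        congr 1
        ring
      simp only [Real.volume_Icc, hlen]
      rw [Finset.prod_const, Finset.card_univ, Fintype.card_fin,
        ENNReal.ofReal_pow (by positivity)]
    calc volume (majorArcs R d₁ d₂ P₁ P₂ θ)
        ≤ volume (⋃ q ∈ Finset.Icc 1 N, ⋃ a ∈ Fintype.piFinset
          (fun _ : Fin R => Finset.Icc (-1 : ℤ) ((q : ℤ) + 1)), Box q a) :=
          measure_mono hsub
      _ ≤ ∑ q ∈ Finset.Icc 1 N, volume (⋃ a ∈ Fintype.piFinset
          (fun _ : Fin R => Finset.Icc (-1 : ℤ) ((q : ℤ) + 1)), Box q a) :=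
          measure_biUnion_finset_le _ _
      _ ≤ ∑ q ∈ Finset.Icc 1 N, ∑ a ∈ Fintype.piFinset
          (fun _ : Fin R => Finset.Icc (-1 : ℤ) ((q : ℤ) + 1)), volume (Box q a) :=
          Finset.sum_le_sum fun q _ => measure_biUnion_finset_le _ _
      _ ≤ ∑ q ∈ Finset.Icc 1 N, ENNReal.ofReal ((4 * D) ^ R) := by
          refine Finset.sum_le_sum fun q hq => ?_
          have hq1 : 1 ≤ q := (Finset.mem_Icc.mp hq).1
          have hqpos : (0:ℝ) < q := by exact_mod_cast hq1
          have hcard : (Fintype.piFinset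
              (fun _ : Fin R => Finset.Icc (-1 : ℤ) ((q : ℤ) + 1))).card = (q + 3) ^ R := by
            rw [Fintype.card_piFinset]
            simp only [Int.card_Icc, Finset.prod_const, Finset.card_univ, Fintype.card_fin]
            have h33 : ((q:ℤ) + 1 + 1 - -1).toNat = q + 3 := by omega
            rw [h33]
          rw [Finset.sum_congr rfl fun a _ => hBoxvol q hq1 a, Finset.sum_const, hcard,
            nsmul_eq_mul]
          rw [← ENNReal.ofReal_natCast ((q+3)^R), ← ENNReal.ofReal_mul (by positivity)]
          refine ENNReal.ofReal_le_ofReal ?_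
          push_cast
          rw [← mul_pow]
          have hq1' : (1:ℝ) ≤ q := by exact_mod_cast hq1
          have hq4 : ((q:ℝ) + 3) * (D / q) ≤ 4 * D := by
            rw [mul_div_assoc', div_le_iff₀ hqpos]
            nlinarith [mul_nonneg hD0 (by linarith : (0:ℝ) ≤ 3 * (q:ℝ) - 3)]
          exact pow_le_pow_left₀ (by positivity) hq4 R
      _ = (N : ℝ≥0∞) * ENNReal.ofReal ((4 * D) ^ R) := by
          rw [Finset.sum_const, Nat.card_Icc, Nat.add_sub_cancel, nsmul_eq_mul]
      _ ≤ ENNReal.ofReal (Q * (4 * D) ^ R) := by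
          rw [← ENNReal.ofReal_natCast N, ← ENNReal.ofReal_mul (by positivity)]
          refine ENNReal.ofReal_le_ofReal ?_
          have hN : (N : ℝ) ≤ Q := Nat.floor_le (by linarith)
          have : (0:ℝ) ≤ (4 * D) ^ R := by positivity
          nlinarith
      _ = ENNReal.ofReal (4 ^ R * P ^ expn) := by
          congr 1
          rw [hDQ, mul_pow, div_pow]
          have hQR : Q ^ R = P ^ (e * R) := by
            rw [hQdef, ← Real.rpow_natCast (P ^ e) R, ← Real.rpow_mul hPpos.le]
          have hPR : P ^ R = P ^ ((R : ℝ)) := (Real.rpow_natCast P R).symm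
          rw [hQR, hPR, hQdef]
          rw [div_eq_mul_inv, ← Real.rpow_neg hPpos.le, mul_comm (P ^ e),
            mul_assoc, mul_assoc, ← Real.rpow_add hPpos, ← Real.rpow_add hPpos]
          rw [hexp]
          ring_nf

end Paper
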